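/- For any two complex n×n positive semidefinite matrices A and B, Tr(A⁴B³ + A³BAB² + A³B²AB + A²BABAB) ≥ 0, i.e., T₁ + T₂ + T₃ + T₅ ≥ 0 where T₁=Tr(AAAABBB), T₂=Tr(AAABABB), T₃=Tr(AAABBAB), T₅=Tr(AABABAB). -/

import Mathlib

open Matrix ComplexOrder

set_option maxHeartbeats 1000000

lemma trace_nonneg_of_posSemidef {n : ℕ} {M : Matrix (Fin n) (Fin n) ℂ}
    (h : M.PosSemidef) : 0 ≤ M.trace := by
  exact h.trace_nonneg

theorem trace_T1235_nonneg {n : ℕ} (A B : Matrix (Fin n) (Fin n) ℂ)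
    (hA : A.PosSemidef) (hB : B.PosSemidef) :
    0 ≤ (A * A * A * A * B * B * B + A * A * A * B * A * B * B
        + A * A * A * B * B * A * B + A * A * B * A * B * A * B).trace := by
  obtain ⟨b, hb, hbb⟩ : ∃ b : Matrix (Fin n) (Fin n) ℂ, b.PosSemidef ∧ b * b = B :=
    by open scoped MatrixOrder in exact ⟨CFC.sqrt B, (CFC.sqrt_nonneg B).posSemidef, CFC.sqrt_mul_sqrt_self B hB.nonneg⟩
  set C := b * A * B * A + b * B * A * A with hC_def
  have hCH : Cᴴ = A * B * A * b + A * A * B * b := by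
    rw [hC_def]
    simp only [conjTranspose_add, conjTranspose_mul, hA.1.eq, hB.1.eq, hb.1.eq]
    simp only [Matrix.mul_assoc]
  have expand : C * Cᴴ = b * (A*B*A*A*B*A) * b + b * (A*B*A*A*A*B) * b
      + b * (B*A*A*A*B*A) * b + b * (B*A*A*A*A*B) * b := by
    rw [hCH, hC_def, add_mul, mul_add, mul_add]
    simp only [Matrix.mul_assoc]
    abel
  have cyc : ∀ X : Matrix (Fin n) (Fin n) ℂ, (b * X * b).trace = (B * X).trace := by
    intro X
    rw [trace_mul_cycle, hbb]
  have t5 : (B*(A*B*A*A*B*A)).trace = (A*A*B*A*B*A*B).trace :=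
    calc (B*(A*B*A*A*B*A)).trace = ((B*A*B)*(A*A*B*A)).trace := by exact congrArg trace (by simp only [Matrix.mul_assoc])
      _ = ((A*A*B*A)*(B*A*B)).trace := trace_mul_comm _ _
      _ = (A*A*B*A*B*A*B).trace := by exact congrArg trace (by simp only [Matrix.mul_assoc])
  have t3 : (B*(A*B*A*A*A*B)).trace = (A*A*A*B*B*A*B).trace :=
    calc (B*(A*B*A*A*A*B)).trace = ((B*A*B)*(A*A*A*B)).trace := by exact congrArg trace (by simp only [Matrix.mul_assoc])
      _ = ((A*A*A*B)*(B*A*B)).trace := trace_mul_comm _ _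
      _ = (A*A*A*B*B*A*B).trace := by exact congrArg trace (by simp only [Matrix.mul_assoc])
  have t2 : (B*(B*A*A*A*B*A)).trace = (A*A*A*B*A*B*B).trace :=
    calc (B*(B*A*A*A*B*A)).trace = ((B*B)*(A*A*A*B*A)).trace := by exact congrArg trace (by simp only [Matrix.mul_assoc])
      _ = ((A*A*A*B*A)*(B*B)).trace := trace_mul_comm _ _
      _ = (A*A*A*B*A*B*B).trace := by exact congrArg trace (by simp only [Matrix.mul_assoc])
  have t1 : (B*(B*A*A*A*A*B)).trace = (A*A*A*A*B*B*B).trace :=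
    calc (B*(B*A*A*A*A*B)).trace = ((B*B)*(A*A*A*A*B)).trace := by exact congrArg trace (by simp only [Matrix.mul_assoc])
      _ = ((A*A*A*A*B)*(B*B)).trace := trace_mul_comm _ _
      _ = (A*A*A*A*B*B*B).trace := by exact congrArg trace (by simp only [Matrix.mul_assoc])
  have key : (C * Cᴴ).trace = (A * A * A * A * B * B * B + A * A * A * B * A * B * B
        + A * A * A * B * B * A * B + A * A * B * A * B * A * B).trace := by
    rw [expand]
    simp only [trace_add, cyc]
    rw [t1, t2, t3, t5]
    ring
  rw [← key]
  exact trace_nonneg_of_posSemidef (Matrix.posSemidef_self_mul_conjTranspose C)
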